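/- There is an injective group homomorphism from the presented group P₄ = ⟨x, y | x⁴, y², (xy)⁴⟩ into the group of affine isometries of the Euclidean plane sending x to c(v) = R_{π/2} v and y to d(v) = R_{π} v + (1,0); i.e., this assignment defines a faithful representation of π₁^orb(S²(2,4,4)) into Isom(E²). -/

import Mathlib

open Real

/-- The Euclidean plane `E²`. -/
abbrev E2 : Type := EuclideanSpace ℝ (Fin 2)

/-- The vector `(x, y)` of the Euclidean plane. -/
def vecE (x y : ℝ) : E2 := WithLp.toLp 2 ![x, y]

/-- Rotation of the Euclidean plane:
`R_θ(x,y) = (x cos θ + y sin θ, −x sin θ + y cos θ)`. -/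
noncomputable def rotE (θ : ℝ) (v : E2) : E2 :=
  vecE (v 0 * Real.cos θ + v 1 * Real.sin θ) (-v 0 * Real.sin θ + v 1 * Real.cos θ)

/-- Relators of `P₄ = ⟨x, y | x⁴, y², (xy)⁴⟩`, the fundamental group of `S²(2,4,4)`. -/
def relsP4 : Set (FreeGroup (Fin 2)) :=
  {(FreeGroup.of 0) ^ 4, (FreeGroup.of 1) ^ 2, (FreeGroup.of 0 * FreeGroup.of 1) ^ 4}

/-- `P₄ = ⟨x, y | x⁴, y², (xy)⁴⟩`. -/
abbrev P4 : Type := PresentedGroup relsP4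

/-!
With `t₁ = y x²` and `t₂ = x⁻¹ t₁ x`, the relators force `t₁` and `t₂` to commute and `x` to act
on them by a quarter turn (`x t₁ x⁻¹ = t₂⁻¹`, `x t₂ x⁻¹ = t₁`). Since `t₁` and `x` generate `P₄`,
every element of `P₄` is a word `t₁ᵃ t₂ᵇ xᵏ`. The representation sends `t₁`, `t₂` to the unit
translations and `x` to a quarter turn of order 4, so that word acts by `v ↦ (a, b) + R^k v`.
This is the identity only if `a = b = 0` and `4 ∣ k`, and then the word is trivial because `x⁴ = 1`.
-/

section NormalForm

variable {G : Type*} [Group G] {t₁ t₂ c : G}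

theorem mul_zpow_mul_zpow_mul_zpow (hcomm : Commute t₁ t₂) (h₁ : c * t₁ * c⁻¹ = t₂⁻¹)
    (h₂ : c * t₂ * c⁻¹ = t₁) (a b k : ℤ) :
    c * (t₁ ^ a * t₂ ^ b * c ^ k) = t₁ ^ b * t₂ ^ (-a) * c ^ (k + 1) :=
  calc c * (t₁ ^ a * t₂ ^ b * c ^ k)
      = (c * t₁ * c⁻¹) ^ a * (c * t₂ * c⁻¹) ^ b * c ^ (k + 1) := by
        simp only [conj_zpow]; group
    _ = t₂ ^ (-a) * t₁ ^ b * c ^ (k + 1) := by rw [h₁, h₂, inv_zpow']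
    _ = t₁ ^ b * t₂ ^ (-a) * c ^ (k + 1) := by rw [(hcomm.zpow_zpow b (-a)).eq]

theorem exists_zpow_mul_zpow_mul_zpow_eq_of_mem_closure (hcomm : Commute t₁ t₂)
    (h₁ : c * t₁ * c⁻¹ = t₂⁻¹) (h₂ : c * t₂ * c⁻¹ = t₁) {g : G}
    (hg : g ∈ Subgroup.closure {t₁, c}) : ∃ a b k : ℤ, t₁ ^ a * t₂ ^ b * c ^ k = g := by
  induction hg using Subgroup.closure_induction_left with
  | one => exact ⟨0, 0, 0, by simp⟩
  | mul_left s hs g _ ih =>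
    obtain ⟨a, b, k, rfl⟩ := ih
    rcases hs with rfl | rfl
    · exact ⟨a + 1, b, k, by group⟩
    · exact ⟨b, -a, k + 1, (mul_zpow_mul_zpow_mul_zpow hcomm h₁ h₂ a b k).symm⟩
  | inv_mul_cancel s hs g _ ih =>
    obtain ⟨a, b, k, rfl⟩ := ih
    rcases hs with rfl | rfl
    · exact ⟨a - 1, b, k, by group⟩
    · refine ⟨-b, a, k - 1, ?_⟩
      rw [eq_inv_mul_iff_mul_eq, mul_zpow_mul_zpow_mul_zpow hcomm h₁ h₂, neg_neg, sub_add_cancel]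

end NormalForm

section Relators

variable {G : Type*} [Group G] {x y : G}

theorem commute_mul_sq_conj (hx : x ^ 4 = 1) (hy : y ^ 2 = 1) (hxy : (x * y) ^ 4 = 1) :
    Commute (y * x ^ 2) (x⁻¹ * (y * x ^ 2) * x) := by
  have hx' : x ^ 3 = x⁻¹ := eq_inv_of_mul_eq_one_left (by rw [← pow_succ, hx])
  have hy' : y = y⁻¹ := eq_inv_of_mul_eq_one_left (by rw [← sq, hy])
  have hxy' : x * y * (x * y) = (x * y * (x * y))⁻¹ :=
    eq_inv_of_mul_eq_one_left (by rw [← hxy]; simp only [pow_succ, pow_zero, one_mul, mul_assoc])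
  calc y * x ^ 2 * (x⁻¹ * (y * x ^ 2) * x) = x⁻¹ * (x * y * (x * y)) * x ^ 3 := by group
    _ = x⁻¹ * (x * y * (x * y))⁻¹ * x⁻¹ := by rw [← hxy', hx']
    _ = x⁻¹ * y⁻¹ * x⁻¹ * y⁻¹ * x ^ 2 * (x ^ 4)⁻¹ := by group
    _ = x⁻¹ * (y * x ^ 2) * x * (y * x ^ 2) := by
      rw [hx, inv_one, mul_one, ← hy', ← hx']; group

theorem conj_mul_sq (hx : x ^ 4 = 1) (hy : y ^ 2 = 1) :
    x * (y * x ^ 2) * x⁻¹ = (x⁻¹ * (y * x ^ 2) * x)⁻¹ := by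
  have hx' : x = (x⁻¹) ^ 3 := by
    rw [inv_pow, eq_inv_iff_mul_eq_one, ← pow_succ', hx]
  have hy' : y = y⁻¹ := eq_inv_of_mul_eq_one_left (by rw [← sq, hy])
  calc x * (y * x ^ 2) * x⁻¹ = x * y * x := by group
    _ = (x⁻¹) ^ 3 * y⁻¹ * x := by rw [← hx', ← hy']
    _ = (x⁻¹ * (y * x ^ 2) * x)⁻¹ := by group

end Relators

@[simp] theorem vecE_apply_zero (a b : ℝ) : vecE a b 0 = a := rfl
@[simp] theorem vecE_apply_one (a b : ℝ) : vecE a b 1 = b := rfl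

theorem E2_ext {v w : E2} (h₀ : v 0 = w 0) (h₁ : v 1 = w 1) : v = w := by
  ext i; fin_cases i <;> assumption

theorem rotE_pi_div_two (v : E2) : rotE (π / 2) v = vecE (v 1) (-v 0) := by
  simp [rotE]

theorem rotE_pi (v : E2) : rotE π v = vecE (-v 0) (-v 1) := by
  simp [rotE]

noncomputable def quarterTurn : E2 ≃ᵢ E2 where
  toFun v := vecE (v 1) (-v 0)
  invFun v := vecE (-v 1) (v 0)
  left_inv v := E2_ext (by simp) (by simp)
  right_inv v := E2_ext (by simp) (by simp)
  isometry_toFun := Isometry.of_dist_eq fun v w => by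
    simp only [EuclideanSpace.dist_eq, Fin.sum_univ_two, Real.dist_eq, vecE_apply_zero,
      vecE_apply_one, sq_abs]
    ring_nf

@[simp] theorem quarterTurn_apply (v : E2) : quarterTurn v = vecE (v 1) (-v 0) := rfl

theorem quarterTurn_pow_four : quarterTurn ^ 4 = 1 :=
  IsometryEquiv.ext fun v => E2_ext (by simp [pow_succ, IsometryEquiv.mul_apply])
    (by simp [pow_succ, IsometryEquiv.mul_apply])

theorem quarterTurn_sq_apply (v : E2) : (quarterTurn ^ 2) v = -v :=
  E2_ext (by simp [sq, IsometryEquiv.mul_apply]) (by simp [sq, IsometryEquiv.mul_apply])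

theorem orderOf_quarterTurn : orderOf quarterTurn = 4 := by
  have hsq : quarterTurn ^ 2 ≠ 1 := fun h => by
    have := congrArg (· 0) (quarterTurn_sq_apply (vecE 1 0))
    norm_num [h] at this
  exact orderOf_eq_prime_pow (p := 2) (n := 1) hsq quarterTurn_pow_four

namespace IsometryEquiv

variable {G X : Type*} [AddGroup G] [PseudoEMetricSpace X] [AddAction G X] [IsIsometricVAdd G X]

variable (X) in
def constVAddHom : Multiplicative G →* (X ≃ᵢ X) where
  toFun u := constVAdd (X := X) u.toAdd
  map_one' := ext fun v => zero_vadd G v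
  map_mul' u w := ext fun v => add_vadd u.toAdd w.toAdd v

@[simp] theorem constVAddHom_apply (u : Multiplicative G) (v : X) :
    constVAddHom X u v = u.toAdd +ᵥ v := rfl

theorem constVAddHom_zpow_apply (u : G) (n : ℤ) (v : X) :
    (constVAddHom X (.ofAdd u) ^ n) v = (n • u) +ᵥ v := by
  rw [← map_zpow, ← ofAdd_zsmul, constVAddHom_apply, toAdd_ofAdd]

theorem zpow_apply_eq_self_of_apply_eq_self {f : X ≃ᵢ X} {p : X} (h : f p = p) (n : ℤ) :
    (f ^ n) p = p := by
  have hinv : f⁻¹ p = p := f.symm_apply_eq.2 h.symm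
  induction n using Int.induction_on with
  | zero => rfl
  | succ n ih => rw [zpow_add_one, mul_apply, h, ih]
  | pred n ih => rw [zpow_sub_one, mul_apply, hinv, ih]

end IsometryEquiv

open IsometryEquiv

noncomputable def shiftedHalfTurn : E2 ≃ᵢ E2 :=
  constVAddHom E2 (.ofAdd (vecE 1 0)) * quarterTurn ^ 2

theorem shiftedHalfTurn_apply (v : E2) : shiftedHalfTurn v = vecE 1 0 - v := by
  rw [shiftedHalfTurn, mul_apply, quarterTurn_sq_apply, constVAddHom_apply, sub_eq_add_neg]; rfl

theorem shiftedHalfTurn_sq : shiftedHalfTurn ^ 2 = 1 :=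
  ext fun v => by simp [sq, mul_apply, shiftedHalfTurn_apply]

theorem quarterTurn_mul_shiftedHalfTurn_pow_four : (quarterTurn * shiftedHalfTurn) ^ 4 = 1 :=
  ext fun v => E2_ext
    (by simp [pow_succ, mul_apply, shiftedHalfTurn_apply])
    (by simp [pow_succ, mul_apply, shiftedHalfTurn_apply])

theorem constVAddHom_mul_quarterTurn :
    constVAddHom E2 (.ofAdd (vecE 1 0)) * quarterTurn =
      quarterTurn * constVAddHom E2 (.ofAdd (vecE 0 1)) :=
  ext fun v => E2_ext (by simp [mul_apply]) (by simp [mul_apply])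

namespace P4

noncomputable def rep : P4 →* (E2 ≃ᵢ E2) :=
  PresentedGroup.toGroup (f := ![quarterTurn, shiftedHalfTurn]) <| by
    rintro r (rfl | rfl | rfl) <;> simp [quarterTurn_pow_four, shiftedHalfTurn_sq,
      quarterTurn_mul_shiftedHalfTurn_pow_four]

theorem relators :
    (PresentedGroup.of 0 : P4) ^ 4 = 1 ∧ (PresentedGroup.of 1 : P4) ^ 2 = 1 ∧
      (PresentedGroup.of 0 * PresentedGroup.of 1 : P4) ^ 4 = 1 := by
  refine ⟨?_, ?_, ?_⟩ <;>
    exact (map_pow (PresentedGroup.mk relsP4) _ _).symm.trans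
      (PresentedGroup.one_of_mem (by simp [relsP4]))

theorem closure_eq_top :
    Subgroup.closure {(PresentedGroup.of 1 * PresentedGroup.of 0 ^ 2 : P4), .of 0} = ⊤ := by
  set H := Subgroup.closure {(PresentedGroup.of 1 * PresentedGroup.of 0 ^ 2 : P4), .of 0}
  have hx : (PresentedGroup.of 0 : P4) ∈ H :=
    Subgroup.subset_closure (Set.mem_insert_of_mem _ rfl)
  have hy : (PresentedGroup.of 1 : P4) ∈ H := by
    simpa using
      H.mul_mem (Subgroup.subset_closure (Set.mem_insert _ _)) (H.inv_mem (H.pow_mem hx 2))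
  rw [eq_top_iff, ← PresentedGroup.closure_range_of, Subgroup.closure_le, Set.range_subset_iff]
  exact Fin.forall_fin_two.2 ⟨hx, hy⟩

theorem rep_of_zero : rep (.of 0) = quarterTurn := PresentedGroup.toGroup.of _

theorem rep_of_one : rep (.of 1) = shiftedHalfTurn := PresentedGroup.toGroup.of _

theorem rep_of_one_mul_of_zero_sq :
    rep (.of 1 * .of 0 ^ 2) = constVAddHom E2 (.ofAdd (vecE 1 0)) := by
  rw [map_mul, map_pow, rep_of_zero, rep_of_one, shiftedHalfTurn, mul_assoc, ← pow_add,
    quarterTurn_pow_four, mul_one]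

theorem rep_conj_of_one_mul_of_zero_sq :
    rep ((.of 0)⁻¹ * (.of 1 * .of 0 ^ 2) * .of 0) = constVAddHom E2 (.ofAdd (vecE 0 1)) := by
  rw [map_mul, map_mul, map_inv, rep_of_one_mul_of_zero_sq, rep_of_zero, mul_assoc,
    constVAddHom_mul_quarterTurn, inv_mul_cancel_left]

theorem rep_injective : Function.Injective rep := by
  obtain ⟨hx, hy, hxy⟩ := relators
  rw [injective_iff_map_eq_one]
  intro g hg
  obtain ⟨a, b, k, rfl⟩ := exists_zpow_mul_zpow_mul_zpow_eq_of_mem_closure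
    (commute_mul_sq_conj hx hy hxy) (conj_mul_sq hx hy) (by group)
    (closure_eq_top ▸ Subgroup.mem_top g)
  rw [map_mul, map_mul, map_zpow, map_zpow, map_zpow, rep_of_one_mul_of_zero_sq,
    rep_conj_of_one_mul_of_zero_sq, rep_of_zero] at hg
  have hfix : ∀ n : ℤ, (quarterTurn ^ n) 0 = 0 :=
    zpow_apply_eq_self_of_apply_eq_self (E2_ext (by simp) (by simp))
  have h0 := congrArg (· (0 : E2)) hg
  simp only [mul_apply, hfix, constVAddHom_zpow_apply] at h0
  obtain ⟨rfl, rfl⟩ : a = 0 ∧ b = 0 := by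
    constructor
    · exact_mod_cast (by simpa using congrArg (· 0) h0 : (a : ℝ) = 0)
    · exact_mod_cast (by simpa using congrArg (· 1) h0 : (b : ℝ) = 0)
  rw [zpow_zero, zpow_zero, one_mul, one_mul] at hg ⊢
  have hk : ((orderOf quarterTurn : ℕ) : ℤ) ∣ k := orderOf_dvd_iff_zpow_eq_one.2 hg
  rw [orderOf_quarterTurn] at hk
  exact orderOf_dvd_iff_zpow_eq_one.1
    ((Int.natCast_dvd_natCast.2 (orderOf_dvd_of_pow_eq_one hx)).trans hk)

end P4

/-- There is an injective (i.e. faithful) homomorphism `P₄ → Isom(E²)` sending the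
generator `x` to `c(v) = R_{π/2} v` and the generator `y` to `d(v) = R_π v + (1,0)`. -/
theorem stmt7 :
    ∃ φ : P4 →* (E2 ≃ᵢ E2),
      Function.Injective φ ∧
      (∀ v : E2, φ (PresentedGroup.of 0) v = rotE (π / 2) v) ∧
      (∀ v : E2, φ (PresentedGroup.of 1) v = rotE π v + vecE 1 0) := by
  refine ⟨P4.rep, P4.rep_injective, fun v => ?_, fun v => ?_⟩
  · rw [P4.rep_of_zero, quarterTurn_apply, rotE_pi_div_two]
  · rw [P4.rep_of_one, shiftedHalfTurn_apply, rotE_pi]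
    exact E2_ext (by simp; ring) (by simp)
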